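/- Let 𝔸 be an (H,μ)-bimodule algebra satisfying the generalized associativity conditions and F a twist of H. Then the deformation isomorphism D_F : 𝔸_⋆ → 𝔸 intertwines the H^F-adjoint actions: D_F(ξ ▶ P) = ξ ▶_F D_F(P) for all ξ ∈ H^F and P ∈ 𝔸, where ξ ▶ P = ξ₁ P S(ξ₂) uses the coproduct of H and ξ ▶_F P = ξ_{1_F} P S^F(ξ_{2_F}) uses the twisted coproduct and antipode of H^F. -/

import Mathlib

open TensorProduct

noncomputable section

variable (K : Type*) [CommRing K] (H : Type*) [Ring H] [HopfAlgebra K H]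

namespace TwistPaper

def muH : H ⊗[K] H →ₗ[K] H := LinearMap.mul' K H
def ΔH : H →ₗ[K] H ⊗[K] H := Coalgebra.comul
def εH : H →ₗ[K] K := Coalgebra.counit
def SH : H →ₗ[K] H := HopfAlgebra.antipode (R := K)

def ins3 : H ⊗[K] H →ₗ[K] H ⊗[K] (H ⊗[K] H) :=
  LinearMap.lTensor H ((TensorProduct.mk K H H).flip 1)
def ins1 : H ⊗[K] H →ₗ[K] H ⊗[K] (H ⊗[K] H) :=
  TensorProduct.mk K H (H ⊗[K] H) 1
def comulLeft : H ⊗[K] H →ₗ[K] H ⊗[K] (H ⊗[K] H) :=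
  (TensorProduct.assoc K H H H).toLinearMap ∘ₗ (ΔH K H).rTensor H
def comulRight : H ⊗[K] H →ₗ[K] H ⊗[K] (H ⊗[K] H) :=
  (ΔH K H).lTensor H
def counitLeft : H ⊗[K] H →ₗ[K] H :=
  (TensorProduct.lid K H).toLinearMap ∘ₗ (εH K H).rTensor H
def counitRight : H ⊗[K] H →ₗ[K] H :=
  (TensorProduct.rid K H).toLinearMap ∘ₗ (εH K H).lTensor H

/-- `F` is a twist of the Hopf algebra `H` with inverse `Finv`. -/
structure IsTwist (F Finv : H ⊗[K] H) : Prop where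
  mul_inv : F * Finv = 1
  inv_mul : Finv * F = 1
  cocycle : ins3 K H F * comulLeft K H F = ins1 K H F * comulRight K H F
  counit_left : counitLeft K H F = 1
  counit_right : counitRight K H F = 1

/-- The twisted coproduct `Δ^F(ξ) = F Δ(ξ) F⁻¹`. -/
def twistComul (F Finv : H ⊗[K] H) : H →ₗ[K] H ⊗[K] H :=
  LinearMap.mulLeft K F ∘ₗ LinearMap.mulRight K Finv ∘ₗ ΔH K H

/-- `χ = f^α S(f_α)`. -/
def chi (F : H ⊗[K] H) : H := muH K H ((SH K H).lTensor H F)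
/-- `χ⁻¹ = S(f̄^α) f̄_α`. -/
def chiInv (Finv : H ⊗[K] H) : H := muH K H ((SH K H).rTensor H Finv)

/-- The twisted antipode `S^F(ξ) = χ S(ξ) χ⁻¹`. -/
def twistAntipode (F Finv : H ⊗[K] H) : H →ₗ[K] H :=
  LinearMap.mulLeft K (chi K H F) ∘ₗ LinearMap.mulRight K (chiInv K H Finv) ∘ₗ SH K H

/-- `sw x f g c v w = Σ c (f x¹ v) (g x² w)` for `x = Σ x¹ ⊗ x²`. -/
def sw {V W V' W' Z : Type*}
    [AddCommGroup V] [Module K V] [AddCommGroup W] [Module K W]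
    [AddCommGroup V'] [Module K V'] [AddCommGroup W'] [Module K W']
    [AddCommGroup Z] [Module K Z]
    (x : H ⊗[K] H) (f : H →ₗ[K] V →ₗ[K] V') (g : H →ₗ[K] W →ₗ[K] W')
    (c : V' →ₗ[K] W' →ₗ[K] Z) : V →ₗ[K] W →ₗ[K] Z :=
  ((TensorProduct.mapBilinear (σ₁₂ := RingHom.id K) (M := H) (N := H) (M₂ := V') (N₂ := W')).compr₂
      (TensorProduct.lift c ∘ₗ LinearMap.applyₗ (R := K) x)).compl₁₂ f.flip g.flip

/-- `ρ` is a left `H`-module structure. -/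
def IsHAction {V : Type*} [AddCommGroup V] [Module K V] (ρ : H →ₗ[K] V →ₗ[K] V) : Prop :=
  (∀ ξ ζ : H, ∀ v : V, ρ (ξ * ζ) v = ρ ξ (ρ ζ v)) ∧ (∀ v : V, ρ 1 v = v)

variable {M : Type*} [AddCommGroup M] [Module K M]

/-- `twistEnd F1 F2 (η ⊗ ζ) = F1 η ∘ₗ F2 ζ` as an operator on `M`. -/
def twistEnd (F1 F2 : H →ₗ[K] M →ₗ[K] M) : H ⊗[K] H →ₗ[K] M →ₗ[K] M :=
  TensorProduct.lift ((LinearMap.llcomp K M M M ∘ₗ F1).compl₂ F2)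

/-- `𝔸` (with product `m`) is an `(H,μ)`-bimodule (left action `L`, right action `Rm`)
satisfying the generalized associativity conditions
`(PQ)ξ = P(Qξ)`, `(Pξ)Q = P(ξQ)`, `ξ(PQ) = (ξP)Q`. -/
structure IsHBimoduleAlgebra (m : M →ₗ[K] M →ₗ[K] M) (L Rm : H →ₗ[K] M →ₗ[K] M) : Prop where
  left_mul : ∀ (ξ ζ : H) (P : M), L (ξ * ζ) P = L ξ (L ζ P)
  left_one : ∀ P : M, L 1 P = P
  right_mul : ∀ (ξ ζ : H) (P : M), Rm (ξ * ζ) P = Rm ζ (Rm ξ P)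
  right_one : ∀ P : M, Rm 1 P = P
  commute : ∀ (ξ ζ : H) (P : M), L ξ (Rm ζ P) = Rm ζ (L ξ P)
  assoc1 : ∀ (ξ : H) (P Q : M), Rm ξ (m P Q) = m P (Rm ξ Q)
  assoc2 : ∀ (ξ : H) (P Q : M), m (Rm ξ P) Q = m P (L ξ Q)
  assoc3 : ∀ (ξ : H) (P Q : M), L ξ (m P Q) = m (L ξ P) Q

/-- The `H`-adjoint action `ξ ▶ P = ξ₁ P S(ξ₂)`. -/
def adjAct (L Rm : H →ₗ[K] M →ₗ[K] M) : H →ₗ[K] M →ₗ[K] M :=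
  twistEnd K H L (Rm ∘ₗ SH K H) ∘ₗ ΔH K H

/-- The deformation map `D_F(P) = (f̄^α ▶ P) f̄_α`. -/
def DF (Finv : H ⊗[K] H) (L Rm : H →ₗ[K] M →ₗ[K] M) : M →ₗ[K] M :=
  twistEnd K H Rm (adjAct K H L Rm) (TensorProduct.comm K H H Finv)

/-- The star product `P ⋆ Q = (f̄^α ▶ P)(f̄_α ▶ Q)` on `𝔸`. -/
def starAlg (Finv : H ⊗[K] H) (m : M →ₗ[K] M →ₗ[K] M) (L Rm : H →ₗ[K] M →ₗ[K] M) :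
    M →ₗ[K] M →ₗ[K] M :=
  sw K H Finv (adjAct K H L Rm) (adjAct K H L Rm) m


/-- The `H^F`-adjoint action `ξ ▶_F P = ξ_{1_F} P S^F(ξ_{2_F})`. -/
def adjActF (F Finv : H ⊗[K] H) (L Rm : H →ₗ[K] M →ₗ[K] M) : H →ₗ[K] M →ₗ[K] M :=
  twistEnd K H L (Rm ∘ₗ twistAntipode K H F Finv) ∘ₗ twistComul K H F Finv

/-!
The commuting left and right actions of `H` on `𝔸` form one representation of `H ⊗ Hᵐᵒᵖ`.
Under it `ξ ▶ ·` is the image of `ad ξ = ξ₁ ⊗ S(ξ₂)`, `ξ ▶_F ·` that of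
`ad_F ξ = ξ_{1_F} ⊗ S^F(ξ_{2_F})`, and `D_F` that of `Γ(F⁻¹)`, where `Γ(x ⊗ y) = (1 ⊗ y) ad x`.
So it suffices to show `Γ(F⁻¹) ad ξ = ad_F ξ Γ(F⁻¹)`. The cocycle condition makes `Δ^F`
coassociative, and together with `χ χ⁻¹ = 1` it gives the antipode axiom for `S^F`; hence
`ξ ⊗ 1 = Δ^F(ξ_{1_F}) (1 ⊗ S^F(ξ_{2_F}))`. Then `Γ(F⁻¹) ad ξ = Γ(F⁻¹ (ξ ⊗ 1))`, and
`F⁻¹ Δ^F(a) = Δ(a) F⁻¹` together with `Γ(Δ(a) z) = (a ⊗ 1) Γ(z)` moves `ad_F ξ` to the left.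
-/

variable {K H}

open MulOpposite

@[simp] lemma muH_tmul (x y : H) : muH K H (x ⊗ₜ y) = x * y := rfl

lemma ins1_mul (z w : H ⊗[K] H) : ins1 K H (z * w) = ins1 K H z * ins1 K H w :=
  map_mul (Algebra.TensorProduct.includeRight : H ⊗[K] H →ₐ[K] H ⊗[K] (H ⊗[K] H)) z w

lemma ins1_one : ins1 K H 1 = 1 := rfl

lemma ins3_mul (z w : H ⊗[K] H) : ins3 K H (z * w) = ins3 K H z * ins3 K H w :=
  map_mul (Algebra.TensorProduct.map (AlgHom.id K H) Algebra.TensorProduct.includeLeft) z w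

lemma ins3_one : ins3 K H 1 = 1 :=
  map_one (Algebra.TensorProduct.map (AlgHom.id K H)
    (Algebra.TensorProduct.includeLeft : H →ₐ[K] H ⊗[K] H))

lemma comulLeft_mul (z w : H ⊗[K] H) :
    comulLeft K H (z * w) = comulLeft K H z * comulLeft K H w :=
  map_mul ((Algebra.TensorProduct.assoc K K K H H H).toAlgHom.comp
    (Algebra.TensorProduct.map (Bialgebra.comulAlgHom K H) (AlgHom.id K H))) z w

lemma comulLeft_one : comulLeft K H 1 = 1 :=
  map_one ((Algebra.TensorProduct.assoc K K K H H H).toAlgHom.comp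
    (Algebra.TensorProduct.map (Bialgebra.comulAlgHom K H) (AlgHom.id K H)))

lemma comulRight_mul (z w : H ⊗[K] H) :
    comulRight K H (z * w) = comulRight K H z * comulRight K H w :=
  map_mul (Algebra.TensorProduct.map (AlgHom.id K H) (Bialgebra.comulAlgHom K H)) z w

lemma comulRight_one : comulRight K H 1 = 1 :=
  map_one (Algebra.TensorProduct.map (AlgHom.id K H) (Bialgebra.comulAlgHom K H))

lemma counitLeft_mul (z w : H ⊗[K] H) :
    counitLeft K H (z * w) = counitLeft K H z * counitLeft K H w :=
  map_mul ((Algebra.TensorProduct.lid K H).toAlgHom.comp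
    (Algebra.TensorProduct.map (Bialgebra.counitAlgHom K H) (AlgHom.id K H))) z w

lemma counitLeft_one : counitLeft K H 1 = 1 :=
  map_one ((Algebra.TensorProduct.lid K H).toAlgHom.comp
    (Algebra.TensorProduct.map (Bialgebra.counitAlgHom K H) (AlgHom.id K H)))

lemma counitRight_mul (z w : H ⊗[K] H) :
    counitRight K H (z * w) = counitRight K H z * counitRight K H w :=
  map_mul ((Algebra.TensorProduct.rid K K H).toAlgHom.comp
    (Algebra.TensorProduct.map (AlgHom.id K H) (Bialgebra.counitAlgHom K H))) z w

lemma counitRight_one : counitRight K H 1 = 1 :=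
  map_one ((Algebra.TensorProduct.rid K K H).toAlgHom.comp
    (Algebra.TensorProduct.map (AlgHom.id K H) (Bialgebra.counitAlgHom K H)))

lemma comulLeft_comul (x : H) : comulLeft K H (ΔH K H x) = comulRight K H (ΔH K H x) :=
  Coalgebra.coassoc_apply x

lemma counitRight_comul (x : H) : counitRight K H (ΔH K H x) = x := by
  simp [counitRight, εH, ΔH, Coalgebra.lTensor_counit_comul]

lemma assoc_mul (z w : (H ⊗[K] H) ⊗[K] H) :
    TensorProduct.assoc K H H H (z * w) =
      TensorProduct.assoc K H H H z * TensorProduct.assoc K H H H w :=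
  map_mul (Algebra.TensorProduct.assoc K K K H H H) z w

lemma assoc_tmul_one (z : H ⊗[K] H) : TensorProduct.assoc K H H H (z ⊗ₜ 1) = ins3 K H z := by
  induction z using TensorProduct.induction_on with
  | zero => simp
  | tmul x y => rfl
  | add z w hz hw => rw [TensorProduct.add_tmul, map_add, hz, hw, map_add]

section Twist

variable {F Finv : H ⊗[K] H}

lemma twistComul_apply (ξ : H) : twistComul K H F Finv ξ = F * ΔH K H ξ * Finv := by
  simp [twistComul, mul_assoc]

lemma twistAntipode_apply (s : H) :
    twistAntipode K H F Finv s = chi K H F * SH K H s * chiInv K H Finv := by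
  simp [twistAntipode, mul_assoc]

lemma rTensor_twistComul (w : H ⊗[K] H) :
    (twistComul K H F Finv).rTensor H w = (F ⊗ₜ 1) * (ΔH K H).rTensor H w * (Finv ⊗ₜ 1) := by
  induction w using TensorProduct.induction_on with
  | zero => simp
  | tmul x y => simp [twistComul_apply, Algebra.TensorProduct.tmul_mul_tmul]
  | add z w hz hw => simp only [map_add, hz, hw, mul_add, add_mul]

lemma lTensor_twistComul (w : H ⊗[K] H) :
    (twistComul K H F Finv).lTensor H w = ins1 K H F * comulRight K H w * ins1 K H Finv := by
  induction w using TensorProduct.induction_on with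
  | zero => simp
  | tmul x y => simp [twistComul_apply, ins1, comulRight, Algebra.TensorProduct.tmul_mul_tmul]
  | add z w hz hw => simp only [map_add, hz, hw, mul_add, add_mul]

lemma assoc_rTensor_twistComul (w : H ⊗[K] H) :
    TensorProduct.assoc K H H H ((twistComul K H F Finv).rTensor H w) =
      ins3 K H F * comulLeft K H w * ins3 K H Finv := by
  rw [rTensor_twistComul, assoc_mul, assoc_mul, assoc_tmul_one, assoc_tmul_one]
  rfl

variable (hF : IsTwist K H F Finv)
include hF

lemma IsTwist.counitRight_inv : counitRight K H Finv = 1 :=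
  calc counitRight K H Finv = counitRight K H F * counitRight K H Finv := by
        rw [hF.counit_right, one_mul]
    _ = 1 := by rw [← counitRight_mul, hF.mul_inv, counitRight_one]

lemma IsTwist.counitLeft_inv : counitLeft K H Finv = 1 :=
  calc counitLeft K H Finv = counitLeft K H Finv * counitLeft K H F := by
        rw [hF.counit_left, mul_one]
    _ = 1 := by rw [← counitLeft_mul, hF.inv_mul, counitLeft_one]

lemma IsTwist.counitRight_twistComul (ξ : H) : counitRight K H (twistComul K H F Finv ξ) = ξ := by
  rw [twistComul_apply, counitRight_mul, counitRight_mul, hF.counit_right, hF.counitRight_inv,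
    counitRight_comul, one_mul, mul_one]

lemma IsTwist.cocycle_inv :
    comulLeft K H Finv * ins3 K H Finv = comulRight K H Finv * ins1 K H Finv := by
  refine left_inv_eq_right_inv (a := ins3 K H F * comulLeft K H F) ?_ ?_
  · rw [mul_assoc, ← mul_assoc (ins3 K H Finv), ← ins3_mul, hF.inv_mul, ins3_one, one_mul,
      ← comulLeft_mul, hF.inv_mul, comulLeft_one]
  · rw [hF.cocycle, mul_assoc, ← mul_assoc (comulRight K H F), ← comulRight_mul, hF.mul_inv,
      comulRight_one, one_mul, ← ins1_mul, hF.mul_inv, ins1_one]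

lemma IsTwist.ins1_inv_mul_ins3 :
    ins1 K H Finv * ins3 K H F = comulRight K H F * comulLeft K H Finv :=
  calc ins1 K H Finv * ins3 K H F
      = ins1 K H Finv * (ins3 K H F * comulLeft K H F) * comulLeft K H Finv := by
        rw [mul_assoc, mul_assoc, ← comulLeft_mul, hF.mul_inv, comulLeft_one, mul_one]
    _ = comulRight K H F * comulLeft K H Finv := by
        rw [hF.cocycle, ← mul_assoc, ← ins1_mul, hF.inv_mul, ins1_one, one_mul]

lemma IsTwist.twistComul_coassoc (ξ : H) :
    TensorProduct.assoc K H H H ((twistComul K H F Finv).rTensor H (twistComul K H F Finv ξ)) =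
      (twistComul K H F Finv).lTensor H (twistComul K H F Finv ξ) := by
  rw [assoc_rTensor_twistComul, lTensor_twistComul, twistComul_apply, comulLeft_mul, comulLeft_mul,
    comulRight_mul, comulRight_mul]
  calc _ = (ins3 K H F * comulLeft K H F) * comulLeft K H (ΔH K H ξ) *
        (comulLeft K H Finv * ins3 K H Finv) := by simp only [mul_assoc]
    _ = (ins1 K H F * comulRight K H F) * comulRight K H (ΔH K H ξ) *
        (comulRight K H Finv * ins1 K H Finv) := by
      rw [hF.cocycle, hF.cocycle_inv, comulLeft_comul]
    _ = _ := by simp only [mul_assoc]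

end Twist

section Antipode

variable (K H) in
def mulAntipodeLTensor : H ⊗[K] H →ₗ[K] H := muH K H ∘ₗ (SH K H).lTensor H

variable (K H) in
def mulAntipodeRTensor : H ⊗[K] H →ₗ[K] H := muH K H ∘ₗ (SH K H).rTensor H

variable (K H) in
def mulAntipodeMul : H ⊗[K] (H ⊗[K] H) →ₗ[K] H :=
  muH K H ∘ₗ (mulAntipodeRTensor K H).lTensor H

@[simp] lemma mulAntipodeLTensor_tmul (x y : H) :
    mulAntipodeLTensor K H (x ⊗ₜ y) = x * SH K H y := rfl

@[simp] lemma mulAntipodeRTensor_tmul (x y : H) :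
    mulAntipodeRTensor K H (x ⊗ₜ y) = SH K H x * y := rfl

@[simp] lemma mulAntipodeMul_tmul (x : H) (w : H ⊗[K] H) :
    mulAntipodeMul K H (x ⊗ₜ w) = x * mulAntipodeRTensor K H w := rfl

lemma mulAntipodeLTensor_comul (x : H) : mulAntipodeLTensor K H (ΔH K H x) = εH K H x • 1 :=
  (HopfAlgebra.mul_antipode_lTensor_comul_apply x).trans (Algebra.algebraMap_eq_smul_one _)

lemma mulAntipodeRTensor_comul (x : H) : mulAntipodeRTensor K H (ΔH K H x) = εH K H x • 1 :=
  (HopfAlgebra.mul_antipode_rTensor_comul_apply x).trans (Algebra.algebraMap_eq_smul_one _)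

lemma antipode_mul (x y : H) : SH K H (x * y) = SH K H y * SH K H x :=
  HopfAlgebra.antipode_mul_antidistrib x y

lemma mulAntipodeLTensor_tmul_mul (a b : H) (w : H ⊗[K] H) :
    mulAntipodeLTensor K H ((a ⊗ₜ b) * w) = a * mulAntipodeLTensor K H w * SH K H b := by
  induction w using TensorProduct.induction_on with
  | zero => simp
  | tmul u v =>
    simp only [Algebra.TensorProduct.tmul_mul_tmul, mulAntipodeLTensor_tmul, antipode_mul,
      mul_assoc]
  | add v w hv hw => simp only [mul_add, map_add, add_mul, hv, hw]

lemma mulAntipodeLTensor_mul (z w : H ⊗[K] H) :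
    mulAntipodeLTensor K H (z * w) =
      mulAntipodeLTensor K H (z * (mulAntipodeLTensor K H w ⊗ₜ 1)) := by
  induction z using TensorProduct.induction_on with
  | zero => simp
  | tmul a b => simp [mulAntipodeLTensor_tmul_mul]
  | add z z' hz hz' => simp only [add_mul, map_add, hz, hz']

lemma mulAntipodeRTensor_mul_tmul (p : H ⊗[K] H) (u v : H) :
    mulAntipodeRTensor K H (p * (u ⊗ₜ v)) = SH K H u * mulAntipodeRTensor K H p * v := by
  induction p using TensorProduct.induction_on with
  | zero => simp
  | tmul x y =>
    simp only [Algebra.TensorProduct.tmul_mul_tmul, mulAntipodeRTensor_tmul, antipode_mul,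
      mul_assoc]
  | add p q hp hq => simp only [add_mul, map_add, mul_add, hp, hq]

lemma mulAntipodeMul_tmul_comul_mul_assoc (a b d : H) (q : H ⊗[K] H) :
    mulAntipodeMul K H ((a ⊗ₜ ΔH K H b) * TensorProduct.assoc K H H H (q ⊗ₜ d)) =
      εH K H b • (a * mulAntipodeLTensor K H q * d) := by
  induction q using TensorProduct.induction_on with
  | zero => simp
  | tmul x y =>
    rw [TensorProduct.assoc_tmul, Algebra.TensorProduct.tmul_mul_tmul, mulAntipodeMul_tmul,
      mulAntipodeRTensor_mul_tmul, mulAntipodeRTensor_comul]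
    simp only [mulAntipodeLTensor_tmul, mul_smul_comm, smul_mul_assoc, mul_one, mul_assoc]
  | add p q hp hq => simp only [TensorProduct.add_tmul, map_add, mul_add, add_mul, smul_add, hp, hq]

lemma mulAntipodeMul_comulRight_mul_comulLeft (z w : H ⊗[K] H) :
    mulAntipodeMul K H (comulRight K H z * comulLeft K H w) =
      counitRight K H z * counitLeft K H w := by
  induction z using TensorProduct.induction_on with
  | zero => simp
  | tmul a b =>
    induction w using TensorProduct.induction_on with
    | zero => simp
    | tmul c d =>
      simp only [comulRight, comulLeft, counitRight, counitLeft, LinearMap.comp_apply,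
        LinearMap.lTensor_tmul, LinearMap.rTensor_tmul, LinearEquiv.coe_coe,
        mulAntipodeMul_tmul_comul_mul_assoc, mulAntipodeLTensor_comul, TensorProduct.rid_tmul,
        TensorProduct.lid_tmul, mul_smul_comm, smul_mul_assoc, mul_one, smul_smul]
      rw [mul_comm]
    | add w w' hw hw' => simp only [map_add, mul_add, hw, hw']
  | add z z' hz hz' => simp only [map_add, add_mul, hz, hz']

lemma mulAntipodeMul_ins1_mul_ins3 (z w : H ⊗[K] H) :
    mulAntipodeMul K H (ins1 K H z * ins3 K H w) =
      mulAntipodeLTensor K H w * mulAntipodeRTensor K H z := by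
  induction z using TensorProduct.induction_on with
  | zero => simp
  | tmul a b =>
    induction w using TensorProduct.induction_on with
    | zero => simp
    | tmul c d =>
      simp only [ins1, ins3, TensorProduct.mk_apply, LinearMap.lTensor_tmul, LinearMap.flip_apply,
        Algebra.TensorProduct.tmul_mul_tmul, mulAntipodeMul_tmul, mulAntipodeRTensor_tmul,
        mulAntipodeLTensor_tmul, one_mul, mul_one, antipode_mul, mul_assoc]
    | add w w' hw hw' => simp only [map_add, mul_add, add_mul, hw, hw']
  | add z z' hz hz' => simp only [map_add, mul_add, add_mul, hz, hz']

lemma chi_eq (F : H ⊗[K] H) : chi K H F = mulAntipodeLTensor K H F := rfl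

lemma chiInv_eq (Finv : H ⊗[K] H) : chiInv K H Finv = mulAntipodeRTensor K H Finv := rfl

variable {F Finv : H ⊗[K] H}

lemma muH_lTensor_twistAntipode (z : H ⊗[K] H) :
    muH K H ((twistAntipode K H F Finv).lTensor H z) =
      mulAntipodeLTensor K H (z * (chi K H F ⊗ₜ 1)) * chiInv K H Finv := by
  induction z using TensorProduct.induction_on with
  | zero => simp
  | tmul x y =>
    simp only [LinearMap.lTensor_tmul, muH_tmul, twistAntipode_apply,
      Algebra.TensorProduct.tmul_mul_tmul, mul_one, mulAntipodeLTensor_tmul, mul_assoc]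
  | add z w hz hw => simp only [map_add, add_mul, hz, hw]

variable (hF : IsTwist K H F Finv)
include hF

lemma IsTwist.chi_mul_chiInv : chi K H F * chiInv K H Finv = 1 := by
  rw [chi_eq, chiInv_eq, ← mulAntipodeMul_ins1_mul_ins3, hF.ins1_inv_mul_ins3,
    mulAntipodeMul_comulRight_mul_comulLeft, hF.counit_right, hF.counitLeft_inv, one_mul]

lemma IsTwist.muH_lTensor_twistAntipode_twistComul (ξ : H) :
    muH K H ((twistAntipode K H F Finv).lTensor H (twistComul K H F Finv ξ)) = εH K H ξ • 1 := by
  have hinv : mulAntipodeLTensor K H (Finv * (chi K H F ⊗ₜ 1)) = 1 := by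
    rw [chi_eq, ← mulAntipodeLTensor_mul, hF.inv_mul, Algebra.TensorProduct.one_def,
      mulAntipodeLTensor_tmul, SH, HopfAlgebra.antipode_one, mul_one]
  rw [muH_lTensor_twistAntipode, twistComul_apply, mul_assoc _ Finv, mulAntipodeLTensor_mul,
    hinv, ← Algebra.TensorProduct.one_def, mul_one, mulAntipodeLTensor_mul,
    mulAntipodeLTensor_comul, ← TensorProduct.smul_tmul', ← Algebra.TensorProduct.one_def,
    mul_smul_comm, mul_one, map_smul, smul_mul_assoc, ← chi_eq, hF.chi_mul_chiInv]

end Antipode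

lemma lTensor_assoc_rTensor_eq_tmul_one {A : Type*} [Semiring A] [Algebra K A]
    (Δ' : H →ₗ[K] H ⊗[K] H)
    (coassoc : ∀ x, TensorProduct.assoc K H H H (Δ'.rTensor H (Δ' x)) = Δ'.lTensor H (Δ' x))
    (counit : ∀ x, counitRight K H (Δ' x) = x)
    (g : H ⊗[K] H →ₗ[K] A) (hg : ∀ x, g (Δ' x) = εH K H x • 1) (ξ : H) :
    g.lTensor H (TensorProduct.assoc K H H H (Δ'.rTensor H (Δ' ξ))) = ξ ⊗ₜ 1 := by
  have collapse : ∀ u, (g ∘ₗ Δ').lTensor H u = counitRight K H u ⊗ₜ 1 := by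
    intro u
    induction u using TensorProduct.induction_on with
    | zero => simp
    | tmul a s => simp [hg, counitRight, TensorProduct.smul_tmul']
    | add u v hu hv => rw [map_add, map_add, hu, hv, TensorProduct.add_tmul]
  rw [coassoc, ← LinearMap.lTensor_comp_apply, collapse, counit]

variable (K H) in
def comulMulAntipode (Δ' : H →ₗ[K] H ⊗[K] H) (S' : H →ₗ[K] H) : H ⊗[K] H →ₗ[K] H ⊗[K] H :=
  TensorProduct.lift ((LinearMap.mul K (H ⊗[K] H)).compl₁₂ Δ' (TensorProduct.mk K H H 1 ∘ₗ S'))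

@[simp] lemma comulMulAntipode_tmul (Δ' : H →ₗ[K] H ⊗[K] H) (S' : H →ₗ[K] H) (a s : H) :
    comulMulAntipode K H Δ' S' (a ⊗ₜ s) = Δ' a * (1 ⊗ₜ S' s) := rfl

lemma comulMulAntipode_comul (Δ' : H →ₗ[K] H ⊗[K] H) (S' : H →ₗ[K] H)
    (coassoc : ∀ x, TensorProduct.assoc K H H H (Δ'.rTensor H (Δ' x)) = Δ'.lTensor H (Δ' x))
    (counit : ∀ x, counitRight K H (Δ' x) = x)
    (mul_antipode : ∀ x, muH K H (S'.lTensor H (Δ' x)) = εH K H x • 1) (ξ : H) :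
    comulMulAntipode K H Δ' S' (Δ' ξ) = ξ ⊗ₜ 1 := by
  have assoc_tmul : ∀ p s, (muH K H ∘ₗ S'.lTensor H).lTensor H
      (TensorProduct.assoc K H H H (p ⊗ₜ s)) = p * (1 ⊗ₜ S' s) := by
    intro p s
    induction p using TensorProduct.induction_on with
    | zero => simp
    | tmul x y => simp [Algebra.TensorProduct.tmul_mul_tmul]
    | add p q hp hq => rw [TensorProduct.add_tmul, map_add, map_add, hp, hq, add_mul]
  have factor : ∀ w, comulMulAntipode K H Δ' S' w =
      (muH K H ∘ₗ S'.lTensor H).lTensor H (TensorProduct.assoc K H H H (Δ'.rTensor H w)) := by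
    intro w
    induction w using TensorProduct.induction_on with
    | zero => simp
    | tmul a s => rw [comulMulAntipode_tmul, LinearMap.rTensor_tmul, assoc_tmul]
    | add v w hv hw => rw [map_add, map_add, map_add, map_add, hv, hw]
  rw [factor]
  exact lTensor_assoc_rTensor_eq_tmul_one Δ' coassoc counit _ mul_antipode ξ

variable (K H) in
def adjElem : H →ₐ[K] H ⊗[K] Hᵐᵒᵖ :=
  (Algebra.TensorProduct.map (AlgHom.id K H) (HopfAlgebra.antipodeAlgHomOp K H)).comp
    (Bialgebra.comulAlgHom K H)

lemma adjElem_apply (ξ : H) :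
    adjElem K H ξ = ((opLinearEquiv K).toLinearMap ∘ₗ SH K H).lTensor H (ΔH K H ξ) := rfl

variable (K H) in
def twistedAdjElem (F Finv : H ⊗[K] H) : H →ₗ[K] H ⊗[K] Hᵐᵒᵖ :=
  ((opLinearEquiv K).toLinearMap ∘ₗ twistAntipode K H F Finv).lTensor H ∘ₗ
    twistComul K H F Finv

variable (K H) in
def adjMulRight : H ⊗[K] H →ₗ[K] H ⊗[K] Hᵐᵒᵖ :=
  TensorProduct.lift ((LinearMap.mul K (H ⊗[K] Hᵐᵒᵖ)).flip.compl₁₂ (adjElem K H).toLinearMap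
    (Algebra.TensorProduct.includeRight.toLinearMap ∘ₗ (opLinearEquiv K).toLinearMap))

lemma adjMulRight_tmul (x y : H) :
    adjMulRight K H (x ⊗ₜ y) = (1 ⊗ₜ op y) * adjElem K H x := rfl

lemma adjMulRight_mul_tmul_one (z : H ⊗[K] H) (ξ : H) :
    adjMulRight K H (z * (ξ ⊗ₜ 1)) = adjMulRight K H z * adjElem K H ξ := by
  induction z using TensorProduct.induction_on with
  | zero => simp
  | tmul x y =>
    rw [Algebra.TensorProduct.tmul_mul_tmul, mul_one, adjMulRight_tmul, adjMulRight_tmul, map_mul,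
      mul_assoc]
  | add z w hz hw => rw [add_mul, map_add, map_add, hz, hw, add_mul]

lemma adjMulRight_mul_one_tmul (z : H ⊗[K] H) (b : H) :
    adjMulRight K H (z * (1 ⊗ₜ b)) = (1 ⊗ₜ op b) * adjMulRight K H z := by
  induction z using TensorProduct.induction_on with
  | zero => simp
  | tmul x y =>
    rw [Algebra.TensorProduct.tmul_mul_tmul, mul_one, adjMulRight_tmul, adjMulRight_tmul,
      ← mul_assoc, Algebra.TensorProduct.tmul_mul_tmul, mul_one, op_mul]
  | add z w hz hw => rw [add_mul, map_add, map_add, hz, hw, mul_add]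

lemma adjMulRight_comul (a : H) : adjMulRight K H (ΔH K H a) = a ⊗ₜ 1 := by
  have factor : ∀ z, adjMulRight K H z = ((opLinearEquiv K).toLinearMap ∘ₗ
      mulAntipodeRTensor K H).lTensor H (TensorProduct.assoc K H H H ((ΔH K H).rTensor H z)) := by
    have assoc_tmul : ∀ p y,
        (1 ⊗ₜ op y) * ((opLinearEquiv K).toLinearMap ∘ₗ SH K H).lTensor H p =
        ((opLinearEquiv K).toLinearMap ∘ₗ mulAntipodeRTensor K H).lTensor H
          (TensorProduct.assoc K H H H (p ⊗ₜ y)) := by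
      intro p y
      induction p using TensorProduct.induction_on with
      | zero => simp
      | tmul u v => simp [Algebra.TensorProduct.tmul_mul_tmul]
      | add p q hp hq => rw [map_add, mul_add, hp, hq, TensorProduct.add_tmul, map_add, map_add]
    intro z
    induction z using TensorProduct.induction_on with
    | zero => simp
    | tmul x y => rw [adjMulRight_tmul, adjElem_apply, assoc_tmul, LinearMap.rTensor_tmul]
    | add z w hz hw => rw [map_add, hz, hw, map_add, map_add, map_add]
  rw [factor]
  refine lTensor_assoc_rTensor_eq_tmul_one (ΔH K H) Coalgebra.coassoc_apply counitRight_comul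
    _ (fun x => ?_) a
  simp only [LinearMap.comp_apply, mulAntipodeRTensor_comul, LinearEquiv.coe_coe,
    coe_opLinearEquiv, op_smul, op_one]

lemma adjMulRight_comul_mul (a : H) (z : H ⊗[K] H) :
    adjMulRight K H (ΔH K H a * z) = (a ⊗ₜ 1) * adjMulRight K H z := by
  induction z using TensorProduct.induction_on with
  | zero => simp
  | tmul x y =>
    have split : (x ⊗ₜ y : H ⊗[K] H) = (x ⊗ₜ 1) * (1 ⊗ₜ y) := by
      rw [Algebra.TensorProduct.tmul_mul_tmul, mul_one, one_mul]
    rw [split, ← mul_assoc, adjMulRight_mul_one_tmul, adjMulRight_mul_tmul_one, adjMulRight_comul,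
      ← split, adjMulRight_tmul, ← mul_assoc, ← mul_assoc, Algebra.TensorProduct.tmul_mul_tmul,
      Algebra.TensorProduct.tmul_mul_tmul, one_mul, mul_one, one_mul, mul_one]
  | add z w hz hw => rw [mul_add, map_add, map_add, hz, hw, mul_add]

section Intertwining

variable {F Finv : H ⊗[K] H} (hF : IsTwist K H F Finv)
include hF

lemma IsTwist.comulMulAntipode_twistComul (ξ : H) :
    comulMulAntipode K H (twistComul K H F Finv) (twistAntipode K H F Finv)
      (twistComul K H F Finv ξ) = ξ ⊗ₜ 1 :=
  comulMulAntipode_comul _ _ hF.twistComul_coassoc hF.counitRight_twistComul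
    hF.muH_lTensor_twistAntipode_twistComul ξ

lemma IsTwist.adjMulRight_inv_mul_comulMulAntipode (u : H ⊗[K] H) :
    adjMulRight K H (Finv * comulMulAntipode K H (twistComul K H F Finv)
      (twistAntipode K H F Finv) u) =
    ((opLinearEquiv K).toLinearMap ∘ₗ twistAntipode K H F Finv).lTensor H u *
      adjMulRight K H Finv := by
  induction u using TensorProduct.induction_on with
  | zero => simp
  | tmul a s =>
    have twist_comul : Finv * twistComul K H F Finv a = ΔH K H a * Finv := by
      rw [twistComul_apply, ← mul_assoc, ← mul_assoc, hF.inv_mul, one_mul]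
    rw [comulMulAntipode_tmul, ← mul_assoc, twist_comul, adjMulRight_mul_one_tmul,
      adjMulRight_comul_mul, ← mul_assoc, Algebra.TensorProduct.tmul_mul_tmul, one_mul, mul_one]
    rfl
  | add u v hu hv => rw [map_add, mul_add, map_add, hu, hv, map_add, add_mul]

lemma IsTwist.adjMulRight_inv_mul_adjElem (ξ : H) :
    adjMulRight K H Finv * adjElem K H ξ = twistedAdjElem K H F Finv ξ * adjMulRight K H Finv := by
  rw [← adjMulRight_mul_tmul_one, ← hF.comulMulAntipode_twistComul ξ,
    hF.adjMulRight_inv_mul_comulMulAntipode]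
  rfl

end Intertwining

section Representation

lemma twistEnd_tmul (F1 F2 : H →ₗ[K] M →ₗ[K] M) (x y : H) :
    twistEnd K H F1 F2 (x ⊗ₜ y) = F1 x * F2 y := rfl

variable {m : M →ₗ[K] M →ₗ[K] M} {L Rm : H →ₗ[K] M →ₗ[K] M}

def IsHBimoduleAlgebra.rep (h : IsHBimoduleAlgebra K H m L Rm) :
    H ⊗[K] Hᵐᵒᵖ →ₐ[K] Module.End K M :=
  Algebra.TensorProduct.lift
    (AlgHom.ofLinearMap L (LinearMap.ext h.left_one) fun x y => LinearMap.ext (h.left_mul x y))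
    (AlgHom.ofLinearMap (Rm ∘ₗ (opLinearEquiv K).symm.toLinearMap) (LinearMap.ext h.right_one)
      fun x y => LinearMap.ext (h.right_mul y.unop x.unop))
    fun x y => LinearMap.ext fun P => h.commute x y.unop P

variable (h : IsHBimoduleAlgebra K H m L Rm)

lemma IsHBimoduleAlgebra.rep_tmul (x : H) (y : Hᵐᵒᵖ) : h.rep (x ⊗ₜ y) = L x * Rm y.unop := rfl

lemma IsHBimoduleAlgebra.rep_lTensor (f : H →ₗ[K] H) (u : H ⊗[K] H) :
    h.rep (((opLinearEquiv K).toLinearMap ∘ₗ f).lTensor H u) = twistEnd K H L (Rm ∘ₗ f) u := by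
  induction u using TensorProduct.induction_on with
  | zero => simp
  | tmul x y => rfl
  | add u v hu hv => rw [map_add, map_add, hu, hv, map_add]

lemma IsHBimoduleAlgebra.adjAct_eq_rep (ξ : H) : adjAct K H L Rm ξ = h.rep (adjElem K H ξ) := by
  rw [adjElem_apply, h.rep_lTensor]
  rfl

lemma IsHBimoduleAlgebra.adjActF_eq_rep (F Finv : H ⊗[K] H) (ξ : H) :
    adjActF K H F Finv L Rm ξ = h.rep (twistedAdjElem K H F Finv ξ) :=
  (h.rep_lTensor _ _).symm

lemma IsHBimoduleAlgebra.DF_eq_rep (Finv : H ⊗[K] H) :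
    DF K H Finv L Rm = h.rep (adjMulRight K H Finv) := by
  suffices ∀ z, twistEnd K H Rm (adjAct K H L Rm) (TensorProduct.comm K H H z) =
      h.rep (adjMulRight K H z) from this Finv
  intro z
  induction z using TensorProduct.induction_on with
  | zero => simp
  | tmul x y =>
    rw [TensorProduct.comm_tmul, twistEnd_tmul, adjMulRight_tmul, map_mul, h.rep_tmul, unop_op,
      h.adjAct_eq_rep, (LinearMap.ext h.left_one : L 1 = 1), one_mul]
  | add z w hz hw => rw [map_add, map_add, hz, hw, map_add, map_add]

end Representation

/-- `D_F` intertwines the `H`-adjoint action `▶` with the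
`H^F`-adjoint action `▶_F`:  `D_F(ξ ▶ P) = ξ ▶_F D_F(P)`. -/
theorem DF_intertwines_adjoint_actions (F Finv : H ⊗[K] H) (hF : IsTwist K H F Finv)
    (m : M →ₗ[K] M →ₗ[K] M) (L Rm : H →ₗ[K] M →ₗ[K] M)
    (h𝔸 : IsHBimoduleAlgebra K H m L Rm) :
    ∀ (ξ : H) (P : M),
      DF K H Finv L Rm (adjAct K H L Rm ξ P)
        = adjActF K H F Finv L Rm ξ (DF K H Finv L Rm P) := by
  intro ξ P
  rw [h𝔸.DF_eq_rep, h𝔸.adjAct_eq_rep, h𝔸.adjActF_eq_rep, ← Module.End.mul_apply,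
    ← Module.End.mul_apply, ← map_mul, ← map_mul, hF.adjMulRight_inv_mul_adjElem]

end TwistPaper
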